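/- arXiv:math/0507513 — 7 statements merged into one kernel-verified Lean document; each statement's English description precedes it below -/
import Mathlib

section
/- If u : E → E is a nilpotent endomorphism of a finite dimensional vector space E over a field k of characteristic zero, then log(exp(u)) = u, where exp(u) = Σ_{l≥0} u^l/l! and log(v) = Σ_{l≥1} (-1)^{l+1}(v - Id)^l/l. -/
/-!
Both sides are polynomials in `u`, so it suffices that the polynomial
`f = log_M ∘ (exp_N - 1) - X` is divisible by `X ^ min N M`. Writing `P = exp_N`, the
geometric series gives `P · log_M'(P - 1) = 1 - (1 - P) ^ (M - 1)`, and `P' = P` up to the term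
of degree `N - 1`; hence `P · f'` is divisible by `X ^ min (N - 1) (M - 1)`. As `P` has constant
term `1`, the same holds for `f'`, and `f(0) = 0` lifts this to `f` in characteristic zero.
-/

open Polynomial Finset

/-- Truncated exponential `Σ_{l<N} u^l / l!` of an endomorphism. -/
noncomputable def truncExp {k E : Type*} [Field k] [AddCommGroup E] [Module k E]
    (u : Module.End k E) (N : ℕ) : Module.End k E :=
  ∑ l ∈ Finset.range N, ((l.factorial : k)⁻¹) • u ^ l

/-- Truncated logarithm `Σ_{1 ≤ l < M} (-1)^{l+1} (v - Id)^l / l` of an endomorphism. -/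
noncomputable def truncLog {k E : Type*} [Field k] [AddCommGroup E] [Module k E]
    (v : Module.End k E) (M : ℕ) : Module.End k E :=
  ∑ l ∈ Finset.range M, (if l = 0 then (0 : k) else (-1 : k) ^ (l + 1) / (l : k)) • (v - 1) ^ l

namespace Polynomial

theorem X_pow_succ_dvd_of_coeff_zero_of_dvd_derivative {R : Type*} [Semiring R]
    [IsAddTorsionFree R] {f : R[X]} {n : ℕ} (h₀ : f.coeff 0 = 0)
    (hf' : X ^ n ∣ derivative f) : X ^ (n + 1) ∣ f := by
  rw [X_pow_dvd_iff] at hf' ⊢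
  rintro (_ | d) hd
  · exact h₀
  · have h : (d + 1) • f.coeff (d + 1) = (d + 1) • 0 := by
      rw [nsmul_eq_mul', smul_zero, Nat.cast_succ, ← coeff_derivative]
      exact hf' d (by omega)
    exact nsmul_right_injective d.succ_ne_zero h

end Polynomial

noncomputable section

variable (k : Type*) [Field k]

def expPoly (N : ℕ) : k[X] := ∑ l ∈ range N, C ((l.factorial : k)⁻¹) * X ^ l

def logPoly (M : ℕ) : k[X] :=
  ∑ l ∈ range M, C (if l = 0 then (0 : k) else (-1 : k) ^ (l + 1) / (l : k)) * X ^ l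

variable {k}

theorem aeval_expPoly {E : Type*} [AddCommGroup E] [Module k E] (u : Module.End k E) (N : ℕ) :
    aeval u (expPoly k N) = truncExp u N := by
  simp [expPoly, truncExp, Algebra.smul_def]

theorem aeval_sub_one_logPoly {E : Type*} [AddCommGroup E] [Module k E] (v : Module.End k E)
    (M : ℕ) : aeval (v - 1) (logPoly k M) = truncLog v M := by
  simp [logPoly, truncLog, Algebra.smul_def]

variable (k)

theorem coeff_zero_expPoly_succ (N : ℕ) : (expPoly k (N + 1)).coeff 0 = 1 := by
  simp [expPoly, coeff_X_pow, sum_range_succ']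

theorem coeff_zero_logPoly (M : ℕ) : (logPoly k M).coeff 0 = 0 := by
  simp [logPoly, coeff_X_pow]

theorem expPoly_succ (N : ℕ) :
    expPoly k (N + 1) = expPoly k N + C ((N.factorial : k)⁻¹) * X ^ N :=
  sum_range_succ _ _

variable [CharZero k]

theorem derivative_expPoly_succ (N : ℕ) : derivative (expPoly k (N + 1)) = expPoly k N := by
  rw [expPoly, derivative_sum, sum_range_succ']
  simp only [derivative_C_mul_X_pow, Nat.add_sub_cancel, Nat.cast_zero, mul_zero, C_0, zero_mul,
    add_zero]
  refine sum_congr rfl fun l _ => ?_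
  rw [Nat.factorial_succ, Nat.cast_mul, mul_inv, mul_right_comm,
    inv_mul_cancel₀ (Nat.cast_ne_zero.mpr l.succ_ne_zero), one_mul]

theorem derivative_logPoly_succ (M : ℕ) :
    derivative (logPoly k (M + 1)) = ∑ j ∈ range M, (-X : k[X]) ^ j := by
  rw [logPoly, derivative_sum, sum_range_succ']
  simp only [derivative_C_mul_X_pow, Nat.add_sub_cancel, Nat.cast_zero, mul_zero, C_0, zero_mul,
    add_zero]
  refine sum_congr rfl fun l _ => ?_
  rw [if_neg l.succ_ne_zero, div_mul_cancel₀ _ (Nat.cast_ne_zero.mpr l.succ_ne_zero),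
    neg_pow (X : k[X]), pow_succ, pow_succ]
  simp

theorem mul_derivative_logPoly_succ_comp (P : k[X]) (M : ℕ) :
    P * (derivative (logPoly k (M + 1))).comp (P - 1) = 1 - (1 - P) ^ M := by
  simpa [derivative_logPoly_succ, Polynomial.sum_comp] using mul_neg_geom_sum (1 - P) M

theorem X_pow_min_dvd_logPoly_comp_expPoly_sub_X (N M : ℕ) :
    X ^ min N M ∣ (logPoly k M).comp (expPoly k N - 1) - X := by
  obtain _ | N := N
  · simp
  obtain _ | M := M
  · simp
  set P := expPoly k (N + 1)
  set f := (logPoly k (M + 1)).comp (P - 1) - X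
  have hP₀ : (P - 1).coeff 0 = 0 := by simp [P, coeff_zero_expPoly_succ]
  have hX_dvd : (X : k[X]) ∣ 1 - P := by
    rw [← neg_sub]
    exact (X_dvd_iff.mpr hP₀).neg_right
  have hP_f' :
      P * derivative f = -(C ((N.factorial : k)⁻¹) * X ^ N) - derivative P * (1 - P) ^ M := by
    have hP' : derivative P = P - C ((N.factorial : k)⁻¹) * X ^ N := by
      rw [derivative_expPoly_succ, eq_sub_iff_add_eq, ← expPoly_succ]
    rw [derivative_sub, derivative_comp, derivative_sub, derivative_one, sub_zero, derivative_X,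
      mul_sub, mul_one, mul_left_comm, mul_derivative_logPoly_succ_comp, hP']
    ring
  have hf' : X ^ min N M ∣ derivative f := by
    refine prime_X.pow_dvd_of_dvd_mul_left (a := P) _ ?_ ?_
    · rw [X_dvd_iff, coeff_zero_expPoly_succ]
      exact one_ne_zero
    rw [hP_f']
    exact dvd_sub ((pow_dvd_pow X (min_le_left N M)).mul_left _).neg_right
      (((pow_dvd_pow X (min_le_right N M)).trans (pow_dvd_pow_of_dvd hX_dvd M)).mul_left _)
  have hf₀ : f.coeff 0 = 0 := by
    rw [coeff_sub, coeff_X_zero, sub_zero, coeff_zero_eq_eval_zero, eval_comp,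
      ← coeff_zero_eq_eval_zero, hP₀, ← coeff_zero_eq_eval_zero, coeff_zero_logPoly]
  rw [Nat.succ_min_succ]
  exact X_pow_succ_dvd_of_coeff_zero_of_dvd_derivative hf₀ hf'

end

theorem log_exp_of_nilpotent_general {k E : Type*} [Field k] [CharZero k]
    [AddCommGroup E] [Module k E]
    (u : Module.End k E) (n : ℕ) (hu : u ^ n = 0)
    (N M : ℕ) (hN : n ≤ N) (hM : n ≤ M) :
    truncLog (truncExp u N) M = u := by
  obtain ⟨S, hS⟩ := (pow_dvd_pow X (le_min hN hM)).trans
    (X_pow_min_dvd_logPoly_comp_expPoly_sub_X k N M)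
  calc truncLog (truncExp u N) M = aeval u ((logPoly k M).comp (expPoly k N - 1)) := by
        rw [aeval_comp, map_sub, map_one, aeval_expPoly, aeval_sub_one_logPoly]
    _ = aeval u (X + X ^ n * S) := by rw [← hS, add_sub_cancel]
    _ = u := by simp [hu]

/-- If `u : E → E` is a nilpotent endomorphism of a finite dimensional vector space `E` over a
field `k` of characteristic zero, then `log (exp u) = u`, where the defining series of `exp` and
`log` are finite sums (any truncation beyond the nilpotency index gives the full series, since
`u` and `exp u - Id` are nilpotent with `u ^ n = 0` and `(exp u - Id) ^ n = 0`). -/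
theorem log_exp_of_nilpotent {k E : Type*} [Field k] [CharZero k]
    [AddCommGroup E] [Module k E] [FiniteDimensional k E]
    (u : Module.End k E) (n : ℕ) (hu : u ^ n = 0)
    (N M : ℕ) (hN : n ≤ N) (hM : n ≤ M) :
    truncLog (truncExp u N) M = u :=
  log_exp_of_nilpotent_general u n hu N M hN hM
end

section
/- Let Q be a finite quiver without oriented cycles. If D is a dilatation of kQ (D(α) = μ_α α with μ_α ∈ k^* for each arrow α, D fixing vertices) and φ_{α,u,τ} is a transvection, then D ∘ φ_{α,u,τ} ∘ D^{-1} = φ_{α,u, τλ/μ}, where λ, μ ∈ k^* are such that D(u) = λ u and D(α) = μ α. -/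
open Quiver in
/-- The generators of the path algebra: one for each vertex, one for each arrow. -/
def PAGen (V : Type) [Quiver.{0} V] : Type := V ⊕ (Σ x y : V, x ⟶ y)

open Quiver FreeAlgebra in
/-- The defining relations of the path algebra of a quiver: the vertices give a complete set of
orthogonal idempotents summing to `1`, and arrows are compatible with their endpoints. -/
inductive PARel (k : Type) [Field k] (V : Type) [Quiver.{0} V] [Fintype V] :
    FreeAlgebra k (PAGen V) → FreeAlgebra k (PAGen V) → Prop
  | idem (x : V) : PARel k V (ι k (Sum.inl x) * ι k (Sum.inl x)) (ι k (Sum.inl x))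
  | orth (x y : V) : x ≠ y → PARel k V (ι k (Sum.inl x) * ι k (Sum.inl y)) 0
  | sum_one : PARel k V (∑ x : V, ι k (Sum.inl x)) 1
  | tgt_comp {x y : V} (a : x ⟶ y) :
      PARel k V (ι k (Sum.inl y) * ι k (Sum.inr ⟨x, y, a⟩)) (ι k (Sum.inr ⟨x, y, a⟩))
  | comp_src {x y : V} (a : x ⟶ y) :
      PARel k V (ι k (Sum.inr ⟨x, y, a⟩) * ι k (Sum.inl x)) (ι k (Sum.inr ⟨x, y, a⟩))

/-- The path algebra `kQ` of a finite quiver, presented by generators and relations. -/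
def PathAlg (k : Type) [Field k] (V : Type) [Quiver.{0} V] [Fintype V] : Type :=
  RingQuot (PARel k V)

noncomputable instance (k : Type) [Field k] (V : Type) [Quiver.{0} V] [Fintype V] :
    Ring (PathAlg k V) := by unfold PathAlg; infer_instance

noncomputable instance (k : Type) [Field k] (V : Type) [Quiver.{0} V] [Fintype V] :
    Algebra k (PathAlg k V) := by unfold PathAlg; infer_instance

/-- The idempotent `e_x` of the path algebra associated with a vertex `x`. -/
noncomputable def vertexEl (k : Type) [Field k] {V : Type} [Quiver.{0} V] [Fintype V] (x : V) :
    PathAlg k V :=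
  RingQuot.mkAlgHom k (PARel k V) (FreeAlgebra.ι k (Sum.inl x))

/-- The element of the path algebra associated with an arrow `a`. -/
noncomputable def arrowEl (k : Type) [Field k] {V : Type} [Quiver.{0} V] [Fintype V]
    {x y : V} (a : x ⟶ y) : PathAlg k V :=
  RingQuot.mkAlgHom k (PARel k V) (FreeAlgebra.ι k (Sum.inr ⟨x, y, a⟩))

/-- The element of the path algebra associated with an oriented path. -/
noncomputable def pathEl (k : Type) [Field k] {V : Type} [Quiver.{0} V] [Fintype V] :
    {x y : V} → Quiver.Path x y → PathAlg k V
  | x, _, Quiver.Path.nil => vertexEl k x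
  | _, _, Quiver.Path.cons p a => arrowEl k a * pathEl k p

/-- The list of arrows (as a list of sigma-pairs) appearing in a path. -/
def pathArrows {V : Type} [Quiver.{0} V] :
    {x y : V} → Quiver.Path x y → List (Σ x y : V, x ⟶ y)
  | _, _, Quiver.Path.nil => []
  | _, _, Quiver.Path.cons p a => ⟨_, _, a⟩ :: pathArrows p

/-- A quiver has no oriented cycle. -/
def NoOrientedCycle (V : Type) [Quiver.{0} V] : Prop :=
  ∀ (x : V) (p : Quiver.Path x x), p.length = 0

/-- A quiver is connected (as an unoriented graph). -/
def QuiverConnected (V : Type) [Quiver.{0} V] : Prop :=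
  ∀ x y : V,
    Relation.ReflTransGen (fun a b => Nonempty (a ⟶ b) ∨ Nonempty (b ⟶ a)) x y

/-- A bypass `(a, u)`: an arrow `a` together with a parallel path `u ≠ a`. -/
def IsBypass {V : Type} [Quiver.{0} V] {x y : V} (a : x ⟶ y) (u : Quiver.Path x y) : Prop :=
  u ≠ a.toPath

/-- A double bypass: two bypasses `(a,u)`, `(b,v)` such that the arrow `b` appears in `u`. -/
def HasDoubleBypass (V : Type) [Quiver.{0} V] : Prop :=
  ∃ (x y : V) (a : x ⟶ y) (u : Quiver.Path x y)
    (x' y' : V) (b : x' ⟶ y') (v : Quiver.Path x' y'),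
    IsBypass a u ∧ IsBypass b v ∧ (⟨x', y', b⟩ : Σ x y : V, x ⟶ y) ∈ pathArrows u

/-- `f` is the transvection `φ_{a,u,τ}`: it fixes all vertices, all arrows other than `a`, and
sends `a` to `a + τ u`. -/
def TransvecSpec (k : Type) [Field k] {V : Type} [Quiver.{0} V] [Fintype V]
    (τ : k) {x y : V} (a : x ⟶ y) (u : Quiver.Path x y)
    (f : PathAlg k V → PathAlg k V) : Prop :=
  (∀ v : V, f (vertexEl k v) = vertexEl k v) ∧
  (∀ ⦃x' y' : V⦄ (b : x' ⟶ y'),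
      (⟨x', y', b⟩ : Σ x y : V, x ⟶ y) ≠ ⟨x, y, a⟩ → f (arrowEl k b) = arrowEl k b) ∧
  f (arrowEl k a) = arrowEl k a + τ • pathEl k u

/-- `f` is a dilatation: it fixes all vertices and scales each arrow by a nonzero scalar. -/
def DilatSpec (k : Type) [Field k] {V : Type} [Quiver.{0} V] [Fintype V]
    (f : PathAlg k V → PathAlg k V) : Prop :=
  (∀ v : V, f (vertexEl k v) = vertexEl k v) ∧
  (∀ ⦃x y : V⦄ (a : x ⟶ y), ∃ μ : k, μ ≠ 0 ∧ f (arrowEl k a) = μ • arrowEl k a)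

/-- For a finite quiver `Q` without oriented cycles, a dilatation `D` of `kQ` and a transvection
`φ_{α,u,τ}`, one has `D ∘ φ_{α,u,τ} ∘ D⁻¹ = φ_{α,u,τλ/μ}` where `D u = λ u` and `D α = μ α`. -/
theorem dilatation_conj_transvection (k : Type) [Field k] (V : Type) [Quiver.{0} V] [Fintype V]
    [∀ x y : V, Fintype (x ⟶ y)] (hacy : NoOrientedCycle V)
    {x y : V} (a : x ⟶ y) (u : Quiver.Path x y) (hbp : IsBypass a u) (τ : k)
    (D φ : PathAlg k V ≃ₐ[k] PathAlg k V)
    (hD : DilatSpec k ⇑D) (hφ : TransvecSpec k τ a u ⇑φ)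
    (lam μ : k) (hlam : lam ≠ 0) (hμ : μ ≠ 0)
    (hDu : D (pathEl k u) = lam • pathEl k u) (hDa : D (arrowEl k a) = μ • arrowEl k a) :
    TransvecSpec k (τ * lam / μ) a u ⇑((D.symm.trans φ).trans D) := by
  obtain ⟨hDv, hDarr⟩ := hD
  obtain ⟨hφv, hφb, hφa⟩ := hφ
  have hsymm_v : ∀ v : V, D.symm (vertexEl k v) = vertexEl k v := fun v =>
    D.injective (by rw [AlgEquiv.apply_symm_apply, hDv])
  refine ⟨fun v => ?_, fun x' y' b hb => ?_, ?_⟩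
  · simp [AlgEquiv.trans_apply, hsymm_v, hφv, hDv]
  · obtain ⟨ν, hν, hDb⟩ := hDarr b
    have hsb : D.symm (arrowEl k b) = ν⁻¹ • arrowEl k b := D.injective (by
      rw [AlgEquiv.apply_symm_apply, map_smul, hDb, smul_smul, inv_mul_cancel₀ hν, one_smul])
    simp [AlgEquiv.trans_apply, hsb, map_smul, hφb b hb, hDb, smul_smul,
      inv_mul_cancel₀ hν, one_smul]
  · have hsa : D.symm (arrowEl k a) = μ⁻¹ • arrowEl k a := D.injective (by
      rw [AlgEquiv.apply_symm_apply, map_smul, hDa, smul_smul, inv_mul_cancel₀ hμ, one_smul])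
    simp only [AlgEquiv.trans_apply, hsa, map_smul, hφa, smul_add, map_add, hDa, hDu, smul_smul,
      inv_mul_cancel₀ hμ, one_smul]
    congr 1
    rw [div_eq_mul_inv]
    ring_nf
end

section
/- Let Q be a finite quiver without oriented cycles. If Q has no double bypass, then any two transvections of kQ commute. -/
/-- An algebra endomorphism fixing vertices and all arrows of a path fixes the path element. -/
theorem fixPath (k : Type) [Field k] {V : Type} [Quiver.{0} V] [Fintype V]
    (f : PathAlg k V →ₐ[k] PathAlg k V)
    (hv : ∀ w : V, f (vertexEl k w) = vertexEl k w) :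
    ∀ {x y : V} (p : Quiver.Path x y),
      (∀ ⦃p' q' : V⦄ (c : p' ⟶ q'), (⟨p', q', c⟩ : Σ x y : V, x ⟶ y) ∈ pathArrows p →
        f (arrowEl k c) = arrowEl k c) →
      f (pathEl k p) = pathEl k p
  | _, _, Quiver.Path.nil, _ => by simp only [pathEl]; exact hv _
  | _, _, Quiver.Path.cons p c, ha => by
    have h1 : f (arrowEl k c) = arrowEl k c := ha c (by simp [pathArrows])
    have h2 : f (pathEl k p) = pathEl k p :=
      fixPath k f hv p (fun p' q' c' hc' => ha c' (by simp [pathArrows, hc']))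
    simp only [pathEl]
    rw [map_mul, h1, h2]

/-- If a finite quiver `Q` without oriented cycles has no double bypass, then any two
transvections of the path algebra `kQ` commute. -/
theorem transvections_commute (k : Type) [Field k] (V : Type) [Quiver.{0} V] [Fintype V]
    [∀ x y : V, Fintype (x ⟶ y)] (hacy : NoOrientedCycle V)
    (hndb : ¬ HasDoubleBypass V)
    {x y : V} (a : x ⟶ y) (u : Quiver.Path x y) (hbp : IsBypass a u) (τ : k)
    {x' y' : V} (b : x' ⟶ y') (v : Quiver.Path x' y') (hbp' : IsBypass b v) (σ : k)
    (φ ψ : PathAlg k V →ₐ[k] PathAlg k V)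
    (hφ : TransvecSpec k τ a u ⇑φ) (hψ : TransvecSpec k σ b v ⇑ψ) :
    φ.comp ψ = ψ.comp φ := by
  obtain ⟨hφv, hφo, hφa⟩ := hφ
  obtain ⟨hψv, hψo, hψa⟩ := hψ
  have hbu : (⟨x', y', b⟩ : Σ x y : V, x ⟶ y) ∉ pathArrows u := fun hm =>
    hndb ⟨x, y, a, u, x', y', b, v, hbp, hbp', hm⟩
  have hav : (⟨x, y, a⟩ : Σ x y : V, x ⟶ y) ∉ pathArrows v := fun hm =>
    hndb ⟨x', y', b, v, x, y, a, u, hbp', hbp, hm⟩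
  have hψu : ψ (pathEl k u) = pathEl k u :=
    fixPath k ψ hψv u (fun p' q' c hc => hψo c (fun he => hbu (he ▸ hc)))
  have hφv' : φ (pathEl k v) = pathEl k v :=
    fixPath k φ hφv v (fun p' q' c hc => hφo c (fun he => hav (he ▸ hc)))
  apply RingQuot.ringQuot_ext'
  apply FreeAlgebra.hom_ext
  funext g
  cases g with
  | inl w =>
    show (φ.comp ψ) (vertexEl k w) = (ψ.comp φ) (vertexEl k w)
    simp [AlgHom.comp_apply, hφv, hψv]
  | inr s =>
    obtain ⟨p, q, c⟩ := s
    show (φ.comp ψ) (arrowEl k c) = (ψ.comp φ) (arrowEl k c)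
    simp only [AlgHom.comp_apply]
    by_cases hca : (⟨p, q, c⟩ : Σ x y : V, x ⟶ y) = ⟨x, y, a⟩
    · rw [congrArg (fun s : Σ x y : V, x ⟶ y => arrowEl k s.2.2) hca]
      by_cases hab : (⟨x, y, a⟩ : Σ x y : V, x ⟶ y) = ⟨x', y', b⟩
      · have hE : arrowEl k a = arrowEl k b :=
          congrArg (fun s : Σ x y : V, x ⟶ y => arrowEl k s.2.2) hab
        rw [hφa, hE, hψa, map_add, map_add, map_smul, map_smul, hψa, hφv', hψu, ← hE, hφa]
        abel
      · rw [hψo a hab, hφa, map_add, map_smul, hψo a hab, hψu]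
    · by_cases hcb : (⟨p, q, c⟩ : Σ x y : V, x ⟶ y) = ⟨x', y', b⟩
      · rw [congrArg (fun s : Σ x y : V, x ⟶ y => arrowEl k s.2.2) hcb]
        have hnab : (⟨x', y', b⟩ : Σ x y : V, x ⟶ y) ≠ ⟨x, y, a⟩ :=
          fun h => hca (hcb.trans h)
        rw [hψa, hφo b hnab, hψa, map_add, map_smul, hφo b hnab, hφv']
      · rw [hψo c hcb, hφo c hca, hψo c hcb]
end

section
/- Let F ⊆ E be a subspace of a finite dimensional k-vector space E with a fixed basis. Then every nonzero element of F is a (possibly trivial) sum of minimal elements of F with pairwise disjoint supports; in particular F is spanned by its minimal elements. -/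
/-- The support of `r` with respect to the basis `b`: the set of basis indices appearing in `r`
with a nonzero coefficient. -/
noncomputable def bSupp {k E : Type*} [Field k] [AddCommGroup E] [Module k E]
    {n : ℕ} (b : Module.Basis (Fin n) k E) (r : E) : Finset (Fin n) :=
  (b.repr r).support

/-- A nonzero element `r` of a subspace `F` is minimal if it cannot be written as the sum of two
nonzero elements of `F` with disjoint supports. -/
def IsMinimalElem {k E : Type*} [Field k] [AddCommGroup E] [Module k E]
    {n : ℕ} (b : Module.Basis (Fin n) k E) (F : Submodule k E) (r : E) : Prop :=
  r ∈ F ∧ r ≠ 0 ∧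
    ¬∃ s t : E, s ∈ F ∧ t ∈ F ∧ s ≠ 0 ∧ t ≠ 0 ∧
      Disjoint (bSupp b s) (bSupp b t) ∧ r = s + t

lemma bSupp_sum {k E : Type*} [Field k] [AddCommGroup E] [Module k E]
    {n : ℕ} (b : Module.Basis (Fin n) k E) {m : ℕ} (f : Fin m → E)
    (h : ∀ i j, i ≠ j → Disjoint (bSupp b (f i)) (bSupp b (f j))) :
    bSupp b (∑ i, f i) = Finset.univ.biUnion (fun i => bSupp b (f i)) := by
  unfold bSupp
  rw [map_sum]
  exact Finsupp.support_sum_eq_biUnion _ h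

lemma bSupp_nonempty {k E : Type*} [Field k] [AddCommGroup E] [Module k E]
    {n : ℕ} (b : Module.Basis (Fin n) k E) {r : E} (hr : r ≠ 0) : (bSupp b r).Nonempty := by
  rw [bSupp, Finsupp.support_nonempty_iff]
  simpa using hr

lemma aux_decomp {k E : Type*} [Field k] [AddCommGroup E] [Module k E]
    {n : ℕ} (b : Module.Basis (Fin n) k E) (F : Submodule k E) :
    ∀ N : ℕ, ∀ r ∈ F, r ≠ 0 → (bSupp b r).card ≤ N → ∃ (m : ℕ) (f : Fin m → E),
      (∀ i, IsMinimalElem b F (f i)) ∧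
      (∀ i j, i ≠ j → Disjoint (bSupp b (f i)) (bSupp b (f j))) ∧
      r = ∑ i, f i := by
  intro N
  induction N with
  | zero =>
    intro r hrF hr hcard
    exact absurd (Finset.card_pos.mpr (bSupp_nonempty b hr)) (by omega)
  | succ N ih =>
    intro r hrF hr hcard
    by_cases hmin : IsMinimalElem b F r
    · exact ⟨1, fun _ => r, fun _ => hmin, fun i j hij => absurd (Subsingleton.elim i j) hij,
        by simp⟩
    · have : ∃ s t : E, s ∈ F ∧ t ∈ F ∧ s ≠ 0 ∧ t ≠ 0 ∧
          Disjoint (bSupp b s) (bSupp b t) ∧ r = s + t := by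
        by_contra h
        exact hmin ⟨hrF, hr, h⟩
      obtain ⟨s, t, hsF, htF, hs0, ht0, hdisj, hrst⟩ := this
      have hsupp : bSupp b r = bSupp b s ∪ bSupp b t := by
        rw [hrst, bSupp, map_add]
        rw [Finsupp.support_add_eq hdisj]; rfl
      have hcards : (bSupp b s).card + (bSupp b t).card ≤ N + 1 := by
        rw [← Finset.card_union_of_disjoint hdisj, ← hsupp]; exact hcard
      have hsne := Finset.card_pos.mpr (bSupp_nonempty b hs0)
      have htne := Finset.card_pos.mpr (bSupp_nonempty b ht0)
      obtain ⟨m₁, f, hfmin, hfdisj, hfsum⟩ := ih s hsF hs0 (by omega)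
      obtain ⟨m₂, g, hgmin, hgdisj, hgsum⟩ := ih t htF ht0 (by omega)
      have hfs : ∀ i, bSupp b (f i) ⊆ bSupp b s := by
        intro i
        rw [hfsum, bSupp_sum b f hfdisj]
        exact Finset.subset_biUnion_of_mem (fun j => bSupp b (f j)) (Finset.mem_univ i)
      have hgt : ∀ j, bSupp b (g j) ⊆ bSupp b t := by
        intro j
        rw [hgsum, bSupp_sum b g hgdisj]
        exact Finset.subset_biUnion_of_mem (fun i => bSupp b (g i)) (Finset.mem_univ j)
      refine ⟨m₁ + m₂, Fin.append f g, ?_, ?_, ?_⟩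
      · intro i
        refine Fin.addCases (fun i => ?_) (fun i => ?_) i
        · rw [Fin.append_left]; exact hfmin i
        · rw [Fin.append_right]; exact hgmin i
      · intro i j
        refine Fin.addCases (fun i => ?_) (fun i => ?_) i <;>
          refine Fin.addCases (fun j => ?_) (fun j => ?_) j <;>
          intro hij <;> simp only [Fin.append_left, Fin.append_right]
        · exact hfdisj i j (fun h => hij (by rw [h]))
        · exact Finset.disjoint_of_subset_left (hfs i)
            (Finset.disjoint_of_subset_right (hgt j) hdisj)
        · exact (Finset.disjoint_of_subset_left (hfs j)
            (Finset.disjoint_of_subset_right (hgt i) hdisj)).symm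
        · exact hgdisj i j (fun h => hij (by rw [h]))
      · rw [hrst, hfsum, hgsum, Fin.sum_univ_add]
        simp [Fin.append_left, Fin.append_right]

/-- Every nonzero element of a subspace `F` of a finite dimensional vector space with a fixed
basis is a sum of minimal elements of `F` with pairwise disjoint supports; in particular `F` is
spanned by its minimal elements. -/
theorem sum_of_minimal_elements {k E : Type*} [Field k] [AddCommGroup E] [Module k E]
    {n : ℕ} (b : Module.Basis (Fin n) k E) (F : Submodule k E) :
    (∀ r ∈ F, r ≠ 0 → ∃ (m : ℕ) (f : Fin m → E),
      (∀ i, IsMinimalElem b F (f i)) ∧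
      (∀ i j, i ≠ j → Disjoint (bSupp b (f i)) (bSupp b (f j))) ∧
      r = ∑ i, f i) ∧
    F ≤ Submodule.span k {r | IsMinimalElem b F r} := by
  have key := fun r hrF hr => aux_decomp b F (bSupp b r).card r hrF hr le_rfl
  refine ⟨key, ?_⟩
  intro r hrF
  by_cases hr : r = 0
  · simp [hr]
  · obtain ⟨m, f, hfmin, _, hsum⟩ := key r hrF hr
    rw [hsum]
    exact Submodule.sum_mem _ fun i _ => Submodule.subset_span (hfmin i)
end

section
/- Let E be a finite dimensional k-vector space with totally ordered basis, F ⊆ E a subspace, and (r_1,...,r_t) the Gröbner basis (reduced echelon basis) of F. Then each r_j is a minimal element of F, i.e., r_j cannot be written as a sum of two nonzero elements of F with disjoint supports. -/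
/-- `r` belongs to `e_l + Span(e_i : i < l)`. -/
def LeadsAt {k E : Type*} [Field k] [AddCommGroup E] [Module k E]
    {n : ℕ} (b : Module.Basis (Fin n) k E) (r : E) (l : Fin n) : Prop :=
  b.repr r l = 1 ∧ ∀ i : Fin n, l ≤ i → i ≠ l → b.repr r i = 0

/-- `(r_1, …, r_t)` is a Gröbner (reduced echelon) basis of `F`. -/
def IsGrobnerBasis {k E : Type*} [Field k] [AddCommGroup E] [Module k E]
    {n : ℕ} (b : Module.Basis (Fin n) k E) (F : Submodule k E) {t : ℕ} (r : Fin t → E) : Prop :=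
  (∀ j, r j ∈ F) ∧ LinearIndependent k r ∧ F ≤ Submodule.span k (Set.range r) ∧
  ∃ idx : Fin t → Fin n,
    (∀ j, LeadsAt b (r j) (idx j)) ∧
    (∀ j j', j ≠ j' → b.repr (r j') (idx j) = 0) ∧
    (∀ v ∈ F, ∀ l : Fin n, LeadsAt b v l → ∃ j, idx j = l)

/-- Each element of the Gröbner (reduced echelon) basis of a subspace `F` is a minimal element of
`F`: it cannot be written as a sum of two nonzero elements of `F` with disjoint supports. -/
theorem grobner_basis_elements_minimal {k E : Type*} [Field k] [AddCommGroup E] [Module k E]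
    {n : ℕ} (b : Module.Basis (Fin n) k E) (F : Submodule k E) {t : ℕ} (r : Fin t → E)
    (hr : IsGrobnerBasis b F r) :
    ∀ j, IsMinimalElem b F (r j) := by
  obtain ⟨hmem, hli, hspan, idx, hlead, hzero, hmax⟩ := hr
  have supp_ne : ∀ v : E, v ≠ 0 → (bSupp b v).Nonempty := by
    intro v hv
    rw [Finset.nonempty_iff_ne_empty]
    intro h
    apply hv
    have : b.repr v = 0 := by
      rwa [← Finsupp.support_eq_empty]
    simpa using congrArg b.repr.symm this
  have key : ∀ v ∈ F, ∀ l : Fin n, (∀ i ∈ bSupp b v, i ≤ l) → l ∈ bSupp b v →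
      ∃ j, idx j = l := by
    intro v hv l hle hl
    have hc : b.repr v l ≠ 0 := by simpa [bSupp, Finsupp.mem_support_iff] using hl
    refine hmax ((b.repr v l)⁻¹ • v) (F.smul_mem _ hv) l ⟨?_, ?_⟩
    · simp [inv_mul_cancel₀ hc]
    · intro i hli hne
      have hns : i ∉ bSupp b v := fun h => hne (le_antisymm (hle i h) hli)
      have : b.repr v i = 0 := by
        simpa [bSupp, Finsupp.notMem_support_iff] using hns
      simp [this]
  intro j
  have hj1 : b.repr (r j) (idx j) = 1 := (hlead j).1
  refine ⟨hmem j, ?_, ?_⟩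
  · intro h
    rw [h] at hj1
    simp at hj1
  rintro ⟨s, u, hs, hu, hs0, hu0, hdisj, heq⟩
  -- main lemma: the piece not containing idx j gives a contradiction
  have main : ∀ s u : E, s ∈ F → u ∈ F → u ≠ 0 →
      Disjoint (bSupp b s) (bSupp b u) → r j = s + u → idx j ∉ bSupp b u → False := by
    intro s u hs hu hu0 hdisj heq hnotin
    have hne := supp_ne u hu0
    set l := (bSupp b u).max' hne with hl
    have hlmem : l ∈ bSupp b u := (bSupp b u).max'_mem hne
    obtain ⟨j', hj'⟩ := key u hu l (fun i hi => Finset.le_max' _ i hi) hlmem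
    have hjj' : j' ≠ j := by
      intro h
      rw [h] at hj'
      exact hnotin (hj' ▸ hlmem)
    have h0 : b.repr (r j) l = 0 := hj' ▸ hzero j' j hjj'
    have hsl : b.repr s l = 0 := by
      have : l ∉ bSupp b s := fun h => (Finset.disjoint_left.mp hdisj h) hlmem
      simpa [bSupp, Finsupp.notMem_support_iff] using this
    have hul : b.repr u l ≠ 0 := by
      simpa [bSupp, Finsupp.mem_support_iff] using hlmem
    rw [heq] at h0
    simp [hsl] at h0
    exact hul h0
  by_cases hc : idx j ∈ bSupp b u
  · have hns : idx j ∉ bSupp b s := fun h => (Finset.disjoint_left.mp hdisj h) hc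
    exact main u s hu hs hs0 hdisj.symm (by rw [heq, add_comm]) hns
  · exact main s u hs hu hu0 hdisj heq hc
end

section
/- Let F : E → B be a covering functor between k-linear categories with E connected, and let r, r' : E → E' be functors into a k-category E' with a covering functor q : E' → B satisfying q∘r = q∘r' = F. If r and r' agree on a single object x_0 of E, then r = r'. -/
/-- A `k`-category: a (locally small) category whose Hom-sets are `k`-vector spaces with
bilinear composition. -/
structure KCat (k : Type) [Field k] : Type 1 where
  Obj : Type
  Hom : Obj → Obj → Type
  instAdd : ∀ x y, AddCommGroup (Hom x y)
  instMod : ∀ x y, Module k (Hom x y)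
  id : ∀ x, Hom x x
  comp : ∀ {x y z}, Hom y z → Hom x y → Hom x z
  id_comp : ∀ {x y} (f : Hom x y), comp (id y) f = f
  comp_id : ∀ {x y} (f : Hom x y), comp f (id x) = f
  assoc : ∀ {w x y z} (f : Hom y z) (g : Hom x y) (h : Hom w x),
    comp (comp f g) h = comp f (comp g h)
  comp_add : ∀ {x y z} (f : Hom y z) (g g' : Hom x y), comp f (g + g') = comp f g + comp f g'
  add_comp : ∀ {x y z} (f f' : Hom y z) (g : Hom x y), comp (f + f') g = comp f g + comp f' g
  comp_smul : ∀ {x y z} (c : k) (f : Hom y z) (g : Hom x y), comp f (c • g) = c • comp f g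
  smul_comp : ∀ {x y z} (c : k) (f : Hom y z) (g : Hom x y), comp (c • f) g = c • comp f g

attribute [instance] KCat.instAdd KCat.instMod

variable {k : Type} [Field k]

/-- A `k`-linear functor between `k`-categories. -/
structure KFunctor (C D : KCat k) where
  obj : C.Obj → D.Obj
  map : ∀ {x y}, C.Hom x y → D.Hom (obj x) (obj y)
  map_id : ∀ x, map (C.id x) = D.id (obj x)
  map_comp : ∀ {x y z} (f : C.Hom y z) (g : C.Hom x y), map (C.comp f g) = D.comp (map f) (map g)
  map_add : ∀ {x y} (f g : C.Hom x y), map (f + g) = map f + map g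
  map_smul : ∀ {x y} (c : k) (f : C.Hom x y), map (c • f) = c • map f

namespace KFunctor

variable {B C D E : KCat k}

/-- Composition of `k`-linear functors. -/
def comp (F : KFunctor D E) (G : KFunctor C D) : KFunctor C E where
  obj := fun x => F.obj (G.obj x)
  map := fun f => F.map (G.map f)
  map_id := fun x => by
    show F.map (G.map (C.id x)) = _
    rw [G.map_id, F.map_id]
  map_comp := fun f g => by
    show F.map (G.map (C.comp f g)) = _
    rw [G.map_comp, F.map_comp]
  map_add := fun f g => by
    show F.map (G.map (f + g)) = _
    rw [G.map_add, F.map_add]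
  map_smul := fun c f => by
    show F.map (G.map (c • f)) = _
    rw [G.map_smul, F.map_smul]

/-- The identity functor. -/
def idF (C : KCat k) : KFunctor C C where
  obj := fun x => x
  map := fun f => f
  map_id := fun _ => rfl
  map_comp := fun _ _ => rfl
  map_add := fun _ _ => rfl
  map_smul := fun _ _ => rfl

instance : Monoid (KFunctor C C) where
  mul := comp
  one := idF C
  mul_assoc := fun _ _ _ => rfl
  one_mul := fun _ => rfl
  mul_one := fun _ => rfl

theorem mul_def (F G : KFunctor C C) : F * G = F.comp G := rfl

end KFunctor

/-- Transport of a morphism along an equality of targets. -/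
def castTgt (D : KCat k) {x y z : D.Obj} (h : y = z) : D.Hom x y →+ D.Hom x z :=
  AddMonoidHom.mk' (fun f => h ▸ f) (by subst h; intro a b; rfl)

/-- Transport of a morphism along an equality of sources. -/
def castSrc (D : KCat k) {x y z : D.Obj} (h : x = z) : D.Hom x y →+ D.Hom z y :=
  AddMonoidHom.mk' (fun f => h ▸ f) (by subst h; intro a b; rfl)

variable {C D : KCat k}

/-- The map `⊕_{F yh = y₀} Hom(xh₀, yh) → Hom(F xh₀, y₀)` induced by a functor `F`. -/
noncomputable def outMap (F : KFunctor C D) (x₀ : C.Obj) (y₀ : D.Obj) :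
    (Π₀ yh : {yh : C.Obj // F.obj yh = y₀}, C.Hom x₀ yh.1) → D.Hom (F.obj x₀) y₀ :=
  letI := Classical.decEq {yh : C.Obj // F.obj yh = y₀}
  fun d => DFinsupp.sumAddHom
    (fun yh => (castTgt D yh.2).comp (AddMonoidHom.mk' F.map (fun a b => F.map_add a b))) d

/-- The map `⊕_{F xh = x₀} Hom(xh, yh₀) → Hom(x₀, F yh₀)` induced by a functor `F`. -/
noncomputable def inMap (F : KFunctor C D) (x₀ : D.Obj) (y₀ : C.Obj) :
    (Π₀ xh : {xh : C.Obj // F.obj xh = x₀}, C.Hom xh.1 y₀) → D.Hom x₀ (F.obj y₀) :=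
  letI := Classical.decEq {xh : C.Obj // F.obj xh = x₀}
  fun d => DFinsupp.sumAddHom
    (fun xh => (castSrc D xh.2).comp (AddMonoidHom.mk' F.map (fun a b => F.map_add a b))) d

/-- `F` is a covering functor: it is surjective on objects and the natural maps
`⊕_{F yh = y₀} Hom(xh₀, yh) → Hom(F xh₀, y₀)` and `⊕_{F xh = x₀} Hom(xh, yh₀) → Hom(x₀, F yh₀)`
are bijective. -/
def IsCovering (F : KFunctor C D) : Prop :=
  (∀ y : D.Obj, ∃ x : C.Obj, F.obj x = y) ∧
  (∀ (x₀ : C.Obj) (y₀ : D.Obj), Function.Bijective (outMap F x₀ y₀)) ∧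
  (∀ (x₀ : D.Obj) (y₀ : C.Obj), Function.Bijective (inMap F x₀ y₀))

/-- A `k`-category is connected if any two objects are linked by a chain of objects with a
nonzero morphism space in one direction or the other. -/
def KConnected (C : KCat k) : Prop :=
  ∀ x y : C.Obj,
    Relation.ReflTransGen (fun a b => (∃ f : C.Hom a b, f ≠ 0) ∨ (∃ f : C.Hom b a, f ≠ 0)) x y

/-- A Galois covering with group `G`: a covering functor together with a `G`-action on the
source, over the base, which is free on objects and transitive on each fibre (equivalently,
`F` factors as the quotient by the free `G`-action followed by an isomorphism). -/
structure GaloisCov {C D : KCat k} (F : KFunctor C D) (G : Type) [Group G] where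
  act : G →* KFunctor C C
  over' : ∀ g : G, F.comp (act g) = F
  free : ∀ (g : G) (x : C.Obj), (act g).obj x = x → g = 1
  surj : ∀ y : D.Obj, ∃ x : C.Obj, F.obj x = y
  trans : ∀ x x' : C.Obj, F.obj x = F.obj x' → ∃ g : G, (act g).obj x = x'
  cov : IsCovering F

section Rigidity

attribute [local instance 2000] Classical.decEq

variable {C' D' : KCat k}

theorem KFunctor.map_zero' (F : KFunctor C' D') {x y : C'.Obj} :
    F.map (0 : C'.Hom x y) = 0 := by
  have h := F.map_add (0 : C'.Hom x y) 0
  rw [add_zero] at h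
  exact left_eq_add.mp h

theorem castTgt_heq (D : KCat k) {x y z : D.Obj} (h : y = z) (f : D.Hom x y) :
    HEq (castTgt D h f) f := by subst h; rfl

theorem castSrc_heq (D : KCat k) {x y z : D.Obj} (h : x = z) (f : D.Hom x y) :
    HEq (castSrc D h f) f := by subst h; rfl

theorem kmap_heq (F : KFunctor C' D') {u u' v v' : C'.Obj} (hu : u = u') (hv : v = v')
    {g : C'.Hom u v} {g' : C'.Hom u' v'} (h : HEq g g') : HEq (F.map g) (F.map g') := by
  subst hu; subst hv; rw [eq_of_heq h]

theorem zero_heq (D : KCat k) {a a' b b' : D.Obj} (ha : a = a') (hb : b = b') :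
    HEq (0 : D.Hom a b) (0 : D.Hom a' b') := by subst ha; subst hb; rfl

theorem fmap_congr {F G : KFunctor C' D'} (h : F = G) {x y : C'.Obj} (f : C'.Hom x y) :
    HEq (F.map f) (G.map f) := by subst h; rfl

theorem outMap_single (F : KFunctor C' D') (x₀ : C'.Obj)
    (y₀ : D'.Obj) [DecidableEq {yh : C'.Obj // F.obj yh = y₀}] (yh : {yh : C'.Obj // F.obj yh = y₀}) (f : C'.Hom x₀ yh.1) :
    outMap F x₀ y₀ (DFinsupp.single yh f) = castTgt D' yh.2 (F.map f) := by
  unfold outMap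
  exact DFinsupp.sumAddHom_single
    (fun yh => (castTgt D' yh.2).comp (AddMonoidHom.mk' F.map (fun a b => F.map_add a b))) yh f

theorem inMap_single (F : KFunctor C' D') (x₀ : D'.Obj)
    (y₀ : C'.Obj) [DecidableEq {xh : C'.Obj // F.obj xh = x₀}] (xh : {xh : C'.Obj // F.obj xh = x₀}) (f : C'.Hom xh.1 y₀) :
    inMap F x₀ y₀ (DFinsupp.single xh f) = castSrc D' xh.2 (F.map f) := by
  unfold inMap
  exact DFinsupp.sumAddHom_single
    (fun xh => (castSrc D' xh.2).comp (AddMonoidHom.mk' F.map (fun a b => F.map_add a b))) xh f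

theorem outMap_zero (F : KFunctor C' D') (x₀ : C'.Obj) (y₀ : D'.Obj) :
    outMap F x₀ y₀ 0 = 0 := by
  show DFinsupp.sumAddHom _ (0 : Π₀ _, _) = 0
  exact map_zero _

theorem kmap_ne_zero (F : KFunctor C' D') (hF : IsCovering F) {x y : C'.Obj}
    (f : C'.Hom x y) (hf : f ≠ 0) : F.map f ≠ 0 := by
  classical
  intro h0
  have hinj := (hF.2.1 x (F.obj y)).1
  have hz : (DFinsupp.single (⟨y, rfl⟩ : {yh : C'.Obj // F.obj yh = F.obj y}) f :
      Π₀ yh : {yh : C'.Obj // F.obj yh = F.obj y}, C'.Hom x yh.1) = 0 := by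
    apply hinj
    rw [outMap_single, outMap_zero]
    apply eq_of_heq
    refine (castTgt_heq D' _ _).trans ?_
    rw [h0]
  exact hf ((DFinsupp.single_eq_zero (β := fun yh : {yh : C'.Obj // F.obj yh = F.obj y} => C'.Hom x yh.1)).mp hz)

theorem KFunctor.ext' {F G : KFunctor C' D'} (ho : F.obj = G.obj)
    (hm : ∀ (x y : C'.Obj) (f : C'.Hom x y), HEq (F.map f) (G.map f)) : F = G := by
  obtain ⟨Fo, Fm, _, _, _, _⟩ := F
  obtain ⟨Go, Gm, _, _, _, _⟩ := G
  dsimp at ho hm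
  subst ho
  have hmm : @Fm = @Gm := by
    funext x y f
    exact eq_of_heq (hm x y f)
  subst hmm
  rfl

variable {E B E' : KCat k}

/-- Forward propagation step. -/
theorem step_fwd (q : KFunctor E' B) (hq : IsCovering q) (r r' : KFunctor E E')
    (hcov : IsCovering (q.comp r))
    (hobj' : ∀ z, q.obj (r'.obj z) = q.obj (r.obj z))
    (hmap' : ∀ {x y : E.Obj} (f : E.Hom x y), HEq (q.map (r'.map f)) (q.map (r.map f)))
    {x y : E.Obj} (hx : r.obj x = r'.obj x) (f : E.Hom x y) (hf : f ≠ 0) :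
    r.obj y = r'.obj y ∧ HEq (r.map f) (r'.map f) := by
  classical
  have hrf : r.map f ≠ 0 := by
    intro h
    have h1 : q.map (r.map f) ≠ 0 := kmap_ne_zero (q.comp r) hcov f hf
    rw [h] at h1
    exact h1 (KFunctor.map_zero' q)
  set i : {yhat : E'.Obj // q.obj yhat = q.obj (r.obj y)} := ⟨r.obj y, rfl⟩ with hi
  set j : {yhat : E'.Obj // q.obj yhat = q.obj (r.obj y)} := ⟨r'.obj y, hobj' y⟩ with hj
  have key : (DFinsupp.single i (r.map f) :
        Π₀ yhat : {yhat : E'.Obj // q.obj yhat = q.obj (r.obj y)}, E'.Hom (r.obj x) yhat.1)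
      = DFinsupp.single j (castSrc E' hx.symm (r'.map f)) := by
    apply (hq.2.1 (r.obj x) (q.obj (r.obj y))).1
    rw [outMap_single, outMap_single]
    apply eq_of_heq
    refine (castTgt_heq B _ _).trans (HEq.trans ?_ (castTgt_heq B _ _).symm)
    refine HEq.trans ?_ (kmap_heq q hx.symm rfl (castSrc_heq E' hx.symm (r'.map f)).symm)
    exact (hmap' f).symm
  rcases (DFinsupp.single_eq_single_iff i j _ _).mp key with ⟨hij, hval⟩ | ⟨hv, _⟩
  · have hoy : r.obj y = r'.obj y := congrArg Subtype.val hij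
    exact ⟨hoy, hval.trans (castSrc_heq E' hx.symm (r'.map f))⟩
  · exact absurd hv hrf

/-- Backward propagation step. -/
theorem step_bwd (q : KFunctor E' B) (hq : IsCovering q) (r r' : KFunctor E E')
    (hcov : IsCovering (q.comp r))
    (hobj' : ∀ z, q.obj (r'.obj z) = q.obj (r.obj z))
    (hmap' : ∀ {x y : E.Obj} (f : E.Hom x y), HEq (q.map (r'.map f)) (q.map (r.map f)))
    {x y : E.Obj} (hx : r.obj x = r'.obj x) (f : E.Hom y x) (hf : f ≠ 0) :
    r.obj y = r'.obj y := by
  classical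
  have hrf : r.map f ≠ 0 := by
    intro h
    have h1 : q.map (r.map f) ≠ 0 := kmap_ne_zero (q.comp r) hcov f hf
    rw [h] at h1
    exact h1 (KFunctor.map_zero' q)
  set i : {yhat : E'.Obj // q.obj yhat = q.obj (r.obj y)} := ⟨r.obj y, rfl⟩ with hi
  set j : {yhat : E'.Obj // q.obj yhat = q.obj (r.obj y)} := ⟨r'.obj y, hobj' y⟩ with hj
  have key : (DFinsupp.single i (r.map f) :
        Π₀ yhat : {yhat : E'.Obj // q.obj yhat = q.obj (r.obj y)}, E'.Hom yhat.1 (r.obj x))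
      = DFinsupp.single j (castTgt E' hx.symm (r'.map f)) := by
    apply (hq.2.2 (q.obj (r.obj y)) (r.obj x)).1
    rw [inMap_single, inMap_single]
    apply eq_of_heq
    refine (castSrc_heq B _ _).trans (HEq.trans ?_ (castSrc_heq B _ _).symm)
    refine HEq.trans ?_ (kmap_heq q rfl hx.symm (castTgt_heq E' hx.symm (r'.map f)).symm)
    exact (hmap' f).symm
  rcases (DFinsupp.single_eq_single_iff i j _ _).mp key with ⟨hij, _⟩ | ⟨hv, _⟩
  · exact congrArg Subtype.val hij
  · exact absurd hv hrf

end Rigidity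

/-- Let `F : E → B` be a covering functor of `k`-categories with `E` connected, and let
`r, r' : E → E'` be `k`-linear functors into a `k`-category `E'` carrying a covering functor
`q : E' → B` with `q∘r = q∘r' = F`.  If `r` and `r'` agree on one object then `r = r'`. -/
theorem covering_functor_rigidity {E B E' : KCat k}
    (F : KFunctor E B) (hF : IsCovering F) (hconn : KConnected E)
    (q : KFunctor E' B) (hq : IsCovering q)
    (r r' : KFunctor E E') (hr : q.comp r = F) (hr' : q.comp r' = F)
    (x₀ : E.Obj) (hx₀ : r.obj x₀ = r'.obj x₀) :
    r = r' := by
  subst hr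
  have hobj' : ∀ z, q.obj (r'.obj z) = q.obj (r.obj z) :=
    fun z => congrFun (congrArg KFunctor.obj hr') z
  have hmap' : ∀ {x y : E.Obj} (f : E.Hom x y), HEq (q.map (r'.map f)) (q.map (r.map f)) :=
    fun f => fmap_congr hr' f
  have hobjall : ∀ z, r.obj z = r'.obj z := by
    intro z
    have h := hconn x₀ z
    induction h with
    | refl => exact hx₀
    | tail h1 step ih =>
      rcases step with ⟨f, hf⟩ | ⟨f, hf⟩
      · exact (step_fwd q hq r r' hF hobj' @hmap' ih f hf).1
      · exact step_bwd q hq r r' hF hobj' @hmap' ih f hf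
  apply KFunctor.ext'
  · funext z; exact hobjall z
  · intro x y f
    by_cases hf : f = 0
    · subst hf
      rw [KFunctor.map_zero', KFunctor.map_zero']
      exact zero_heq E' (hobjall x) (hobjall y)
    · exact (step_fwd q hq r r' hF hobj' @hmap' (hobjall x) f hf).2
end

section
/- Let Q be a finite connected quiver without oriented cycles and let A = kQ/I with I admissible. If A is constricted (dim_k e_y(kQ/I)e_x = 1 for every arrow x → y of Q), then for every bypass (α,u) of Q the path u lies in I, and consequently φ(I) = I for every transvection φ of kQ. -/
/-- The two-sided ideal of the path algebra spanned by the paths of length at least `n`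
(for `n = 1` this is `kQ⁺`, and `pathsIdealGE n` is `(kQ⁺)ⁿ`). -/
noncomputable def pathsIdealGE (k : Type) [Field k] (V : Type) [Quiver.{0} V] [Fintype V]
    (n : ℕ) : TwoSidedIdeal (PathAlg k V) :=
  TwoSidedIdeal.span {z | ∃ (x y : V) (p : Quiver.Path x y), n ≤ p.length ∧ z = pathEl k p}

/-- A two-sided ideal `I` of `kQ` is admissible if `(kQ⁺)ⁿ ⊆ I ⊆ (kQ⁺)²` for some `n ≥ 2`. -/
def IsAdmissible (k : Type) [Field k] (V : Type) [Quiver.{0} V] [Fintype V]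
    (I : TwoSidedIdeal (PathAlg k V)) : Prop :=
  ∃ n : ℕ, 2 ≤ n ∧ pathsIdealGE k V n ≤ I ∧ I ≤ pathsIdealGE k V 2

/-- The algebra `A = kQ/I` is constricted: for every arrow `x ⟶ y` of `Q`, the subspace
`e_y·(kQ/I)·e_x` is one-dimensional. -/
noncomputable def Constricted (k : Type) [Field k] (V : Type) [Quiver.{0} V] [Fintype V]
    (I : TwoSidedIdeal (PathAlg k V)) : Prop :=
  ∀ (x y : V) (_ : x ⟶ y),
    Module.finrank k
      ↥(LinearMap.range
        ((LinearMap.mulLeft k (I.ringCon.mk' (vertexEl k y))).comp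
          (LinearMap.mulRight k (I.ringCon.mk' (vertexEl k x))))) = 1

section Aux
open Quiver
variable (k : Type) [Field k] {V : Type} [Quiver.{0} V] [Fintype V]

lemma vertexEl_mul_arrowEl {x y : V} (a : x ⟶ y) :
    vertexEl k y * arrowEl k a = arrowEl k a := by
  have h := RingQuot.mkAlgHom_rel k (PARel.tgt_comp (k := k) a)
  erw [map_mul] at h
  exact h

lemma arrowEl_mul_vertexEl {x y : V} (a : x ⟶ y) :
    arrowEl k a * vertexEl k x = arrowEl k a := by
  have h := RingQuot.mkAlgHom_rel k (PARel.comp_src (k := k) a)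
  erw [map_mul] at h
  exact h

lemma vertexEl_mul_vertexEl (x : V) :
    vertexEl k x * vertexEl k x = vertexEl k x := by
  have h := RingQuot.mkAlgHom_rel k (PARel.idem (k := k) (V := V) x)
  erw [map_mul] at h
  exact h

lemma vertexEl_mul_pathEl : ∀ {x y : V} (p : Path x y),
    vertexEl k y * pathEl k p = pathEl k p
  | _, _, .nil => by simp only [pathEl]; exact vertexEl_mul_vertexEl k _
  | _, _, .cons p a => by
      simp only [pathEl]; rw [← mul_assoc, vertexEl_mul_arrowEl]

lemma pathEl_mul_vertexEl : ∀ {x y : V} (p : Path x y),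
    pathEl k p * vertexEl k x = pathEl k p
  | _, _, .nil => by simp only [pathEl]; exact vertexEl_mul_vertexEl k _
  | _, _, .cons p a => by
      simp only [pathEl]; rw [mul_assoc, pathEl_mul_vertexEl]

end Aux
section Aux2
open Quiver
variable (k : Type) [Field k] {V : Type} [Quiver.{0} V] [Fintype V]

open scoped Classical in
/-- Generators-to-matrices map used to separate elements of the path algebra. -/
noncomputable def FGen {x0 y0 : V} (c : x0 ⟶ y0) : PAGen V → Matrix (Fin 2) (Fin 2) k
  | Sum.inl v => !![if v = x0 then 1 else 0, 0; 0, if v = y0 then 1 else 0]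
  | Sum.inr σ => !![0, 0; if σ = (⟨x0, y0, c⟩ : Σ x y : V, x ⟶ y) then 1 else 0, 0]

lemma lift_FGen_inl {x0 y0 : V} (c : x0 ⟶ y0) (v : V) :
    FreeAlgebra.lift k (FGen k c)
      (FreeAlgebra.ι k (Sum.inl v) : FreeAlgebra k (V ⊕ (Σ x y : V, x ⟶ y)))
      = FGen k c (Sum.inl v) :=
  FreeAlgebra.lift_ι_apply _ _

lemma lift_FGen_inr {x0 y0 : V} (c : x0 ⟶ y0) (σ : Σ x y : V, x ⟶ y) :
    FreeAlgebra.lift k (FGen k c)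
      (FreeAlgebra.ι k (Sum.inr σ) : FreeAlgebra k (V ⊕ (Σ x y : V, x ⟶ y)))
      = FGen k c (Sum.inr σ) :=
  FreeAlgebra.lift_ι_apply _ _

lemma lift_FGen_inl' {x0 y0 : V} (c : x0 ⟶ y0) (v : V) :
    FreeAlgebra.lift k (FGen k c) (FreeAlgebra.ι k (X := PAGen V) (Sum.inl v))
      = FGen k c (Sum.inl v) :=
  FreeAlgebra.lift_ι_apply _ _

lemma lift_FGen_inr' {x0 y0 : V} (c : x0 ⟶ y0) (σ : Σ x y : V, x ⟶ y) :
    FreeAlgebra.lift k (FGen k c) (FreeAlgebra.ι k (X := PAGen V) (Sum.inr σ))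
      = FGen k c (Sum.inr σ) :=
  FreeAlgebra.lift_ι_apply _ _

lemma FGen_rel {x0 y0 : V} (c : x0 ⟶ y0) ⦃a b : FreeAlgebra k (PAGen V)⦄
    (h : PARel k V a b) :
    FreeAlgebra.lift k (FGen k c) a = FreeAlgebra.lift k (FGen k c) b := by
  classical
  induction h with
  | idem x =>
      erw [map_mul]
      simp only [lift_FGen_inl, lift_FGen_inr, lift_FGen_inl', lift_FGen_inr', FGen]
      ext i j
      fin_cases i <;> fin_cases j <;>
        simp [Matrix.mul_apply, Fin.sum_univ_two] <;> split_ifs <;> simp_all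
  | orth x y hxy =>
      erw [map_mul]
      simp only [lift_FGen_inl, lift_FGen_inr, lift_FGen_inl', lift_FGen_inr', FGen]
      ext i j
      fin_cases i <;> fin_cases j <;>
        simp [Matrix.mul_apply, Fin.sum_univ_two] <;>
          (intro h1 h2; exact hxy (h2.trans h1.symm))
  | sum_one =>
      rw [map_sum, map_one]
      ext i j
      fin_cases i <;> fin_cases j <;>
        simp [lift_FGen_inl, lift_FGen_inl', FGen, Matrix.sum_apply, Matrix.one_apply,
          Finset.sum_ite_eq']
  | tgt_comp a =>
      rename_i s t
      erw [map_mul]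
      simp only [lift_FGen_inl, lift_FGen_inr, lift_FGen_inl', lift_FGen_inr', FGen]
      by_cases h : (⟨s, t, a⟩ : Σ x y : V, x ⟶ y) = ⟨x0, y0, c⟩
      · obtain ⟨rfl, h2⟩ := Sigma.mk.inj_iff.mp h
        obtain ⟨rfl, -⟩ := Sigma.mk.inj_iff.mp (eq_of_heq h2)
        ext i j
        fin_cases i <;> fin_cases j <;>
          simp [Matrix.mul_apply, Fin.sum_univ_two, h]
      · ext i j
        fin_cases i <;> fin_cases j <;>
          simp [Matrix.mul_apply, Fin.sum_univ_two, h]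
  | comp_src a =>
      rename_i s t
      erw [map_mul]
      simp only [lift_FGen_inl, lift_FGen_inr, lift_FGen_inl', lift_FGen_inr', FGen]
      by_cases h : (⟨s, t, a⟩ : Σ x y : V, x ⟶ y) = ⟨x0, y0, c⟩
      · obtain ⟨rfl, h2⟩ := Sigma.mk.inj_iff.mp h
        obtain ⟨rfl, -⟩ := Sigma.mk.inj_iff.mp (eq_of_heq h2)
        ext i j
        fin_cases i <;> fin_cases j <;>
          simp [Matrix.mul_apply, Fin.sum_univ_two, h]
      · ext i j
        fin_cases i <;> fin_cases j <;>
          simp [Matrix.mul_apply, Fin.sum_univ_two, h]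

/-- The separating algebra hom attached to an arrow `c`. -/
noncomputable def Fmat {x0 y0 : V} (c : x0 ⟶ y0) :
    PathAlg k V →ₐ[k] Matrix (Fin 2) (Fin 2) k :=
  RingQuot.liftAlgHom k ⟨FreeAlgebra.lift k (FGen k c), FGen_rel k c⟩

lemma Fmat_vertex {x0 y0 : V} (c : x0 ⟶ y0) (v : V) :
    Fmat k c (vertexEl k v) = FGen k c (Sum.inl v) := by
  rw [vertexEl]
  erw [RingQuot.liftAlgHom_mkAlgHom_apply]
  erw [FreeAlgebra.lift_ι_apply]

lemma Fmat_arrow {x0 y0 : V} (c : x0 ⟶ y0) {s t : V} (b : s ⟶ t) :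
    Fmat k c (arrowEl k b) = FGen k c (Sum.inr ⟨s, t, b⟩) := by
  rw [arrowEl]
  erw [RingQuot.liftAlgHom_mkAlgHom_apply]
  erw [FreeAlgebra.lift_ι_apply]

end Aux2
section Aux3
open Quiver
variable (k : Type) [Field k] {V : Type} [Quiver.{0} V] [Fintype V]

lemma Fmat_path_lower {x0 y0 : V} (c : x0 ⟶ y0) :
    ∀ {x y : V} (p : Path x y), ∃ d1 d2 μ : k,
      Fmat k c (pathEl k p) = !![d1, 0; μ, d2]
  | x, _, .nil => by
      classical
      exact ⟨(if x = x0 then 1 else 0), (if x = y0 then 1 else 0), 0, by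
        simp only [pathEl, Fmat_vertex, FGen]⟩
  | _, _, .cons p a => by
      classical
      obtain ⟨d1, d2, μ, hp⟩ := Fmat_path_lower c p
      refine ⟨0, 0, (if (⟨_, _, a⟩ : Σ x y : V, x ⟶ y) = ⟨x0, y0, c⟩ then 1 else 0) * d1, ?_⟩
      simp only [pathEl, map_mul, hp, Fmat_arrow, FGen]
      ext i j
      fin_cases i <;> fin_cases j <;>
        simp [Matrix.mul_apply, Fin.sum_univ_two]

lemma Fmat_path_pos {x0 y0 : V} (c : x0 ⟶ y0) {x y : V} (p : Path x y)
    (hp : p.length ≠ 0) : ∃ μ : k, Fmat k c (pathEl k p) = !![0, 0; μ, 0] := by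
  classical
  cases p with
  | nil => simp at hp
  | cons q a =>
      obtain ⟨d1, d2, μ, hq⟩ := Fmat_path_lower k c q
      refine ⟨(if (⟨_, _, a⟩ : Σ x y : V, x ⟶ y) = ⟨x0, y0, c⟩ then 1 else 0) * d1, ?_⟩
      simp only [pathEl, map_mul, hq, Fmat_arrow, FGen]
      ext i j
      fin_cases i <;> fin_cases j <;>
        simp [Matrix.mul_apply, Fin.sum_univ_two]

lemma Fmat_path_two {x0 y0 : V} (c : x0 ⟶ y0) {x y : V} (p : Path x y)
    (hp : 2 ≤ p.length) : Fmat k c (pathEl k p) = 0 := by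
  classical
  cases p with
  | nil => simp at hp
  | cons q a =>
      have hq : q.length ≠ 0 := by
        simp only [Path.length_cons] at hp
        omega
      obtain ⟨μ, hμ⟩ := Fmat_path_pos k c q hq
      simp only [pathEl, map_mul, hμ, Fmat_arrow, FGen]
      ext i j
      fin_cases i <;> fin_cases j <;>
        simp [Matrix.mul_apply, Fin.sum_univ_two]

lemma pathsIdealGE_two_le_ker {x0 y0 : V} (c : x0 ⟶ y0) :
    pathsIdealGE k V 2 ≤ TwoSidedIdeal.ker (Fmat k c) := by
  intro z hz
  rw [pathsIdealGE] at hz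
  refine TwoSidedIdeal.mem_span_iff.mp hz _ ?_
  rintro _ ⟨x, y, p, hl, rfl⟩
  exact (TwoSidedIdeal.mem_ker _).mpr (Fmat_path_two k c p hl)

lemma mem_iff_mk'_eq_zero {R : Type _} [Ring R] (I : TwoSidedIdeal R) (z : R) :
    z ∈ I ↔ I.ringCon.mk' z = 0 := by
  rw [TwoSidedIdeal.mem_iff, ← map_zero I.ringCon.mk']
  exact I.ringCon.eq.symm

end Aux3
set_option maxHeartbeats 1000000
set_option synthInstance.maxHeartbeats 1000000

/-- Let `Q` be a finite connected quiver without oriented cycles and `A = kQ/I` with `I`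
admissible.  If `A` is constricted then `u ∈ I` for every bypass `(α,u)` of `Q`, and
consequently `φ(I) = I` for every transvection `φ` of `kQ`. -/
theorem constricted_bypass_in_ideal (k : Type) [Field k] (V : Type) [Quiver.{0} V]
    [Fintype V] [∀ x y : V, Fintype (x ⟶ y)]
    (hacy : NoOrientedCycle V) (hconn : QuiverConnected V)
    (I : TwoSidedIdeal (PathAlg k V)) (hI : IsAdmissible k V I)
    (hcon : Constricted k V I) :
    (∀ (x y : V) (a : x ⟶ y) (u : Quiver.Path x y), IsBypass a u → pathEl k u ∈ I) ∧
    (∀ (φ : PathAlg k V ≃ₐ[k] PathAlg k V) (x y : V) (a : x ⟶ y) (u : Quiver.Path x y) (τ : k),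
      IsBypass a u → TransvecSpec k τ a u ⇑φ →
      ∀ z : PathAlg k V, z ∈ I ↔ φ z ∈ I) := by
  classical
  obtain ⟨n, -, -, hIle⟩ := hI
  have part1 : ∀ (x y : V) (a : x ⟶ y) (u : Quiver.Path x y),
      IsBypass a u → pathEl k u ∈ I := by
    intro x y a u hbyp
    set π := I.ringCon.mk' with hπdef
    have key : ∀ z : PathAlg k V, (vertexEl k y * z = z) → (z * vertexEl k x = z) →
        π z ∈ LinearMap.range
          ((LinearMap.mulLeft k (π (vertexEl k y))).comp
            (LinearMap.mulRight k (π (vertexEl k x)))) := by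
      intro z h1 h2
      refine ⟨π z, ?_⟩
      simp only [LinearMap.comp_apply, LinearMap.mulRight_apply, LinearMap.mulLeft_apply]
      rw [← map_mul, ← map_mul, h2, h1]
    have hu_range := key _ (vertexEl_mul_pathEl k u) (pathEl_mul_vertexEl k u)
    have ha_range := key _ (vertexEl_mul_arrowEl k a) (arrowEl_mul_vertexEl k a)
    have ha_ne : π (arrowEl k a) ≠ 0 := by
      intro h0
      have hmem : arrowEl k a ∈ I := (mem_iff_mk'_eq_zero I _).mpr h0
      have h2 := (TwoSidedIdeal.mem_ker _).mp (pathsIdealGE_two_le_ker k a (hIle hmem))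
      rw [Fmat_arrow] at h2
      have e := Matrix.ext_iff.mpr h2 1 0
      simp [FGen] at e
    have h1 := hcon x y a
    have hall := (finrank_eq_one_iff_of_nonzero'
      (⟨π (arrowEl k a), ha_range⟩ :
        LinearMap.range ((LinearMap.mulLeft k (π (vertexEl k y))).comp
          (LinearMap.mulRight k (π (vertexEl k x)))))
      (by simpa using ha_ne)).mp h1
    obtain ⟨μ, hμ⟩ := hall ⟨π (pathEl k u), hu_range⟩
    have hμ' : μ • π (arrowEl k a) = π (pathEl k u) := by
      have := congrArg Subtype.val hμ
      simpa using this
    have hz : pathEl k u - μ • arrowEl k a ∈ I := by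
      rw [mem_iff_mk'_eq_zero, map_sub]
      have hsm : π (μ • arrowEl k a) = μ • π (arrowEl k a) := rfl
      rw [hsm, hμ', sub_self]
    cases u with
    | nil => exact absurd (hacy x a.toPath) (by simp [Quiver.Hom.toPath])
    | cons q b =>
      rename_i w
      cases q with
      | nil =>
        -- u = b.toPath with b : x ⟶ y, b ≠ a ; derive a contradiction
        exfalso
        have hab : ¬ (a = b) := fun h => hbyp (by rw [h]; rfl)
        have h2 := (TwoSidedIdeal.mem_ker _).mp (pathsIdealGE_two_le_ker k b (hIle hz))
        rw [map_sub, map_smul] at h2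
        simp only [pathEl, map_mul, Fmat_arrow, Fmat_vertex, FGen] at h2
        have e := Matrix.ext_iff.mpr h2 1 0
        simp [Matrix.mul_apply, Fin.sum_univ_two, hab] at e
      | cons r s =>
        have hu2 : 2 ≤ (Quiver.Path.cons (Quiver.Path.cons r s) b).length := by
          simp [Quiver.Path.length_cons]
        have hu_mem : pathEl k (Quiver.Path.cons (Quiver.Path.cons r s) b)
            ∈ pathsIdealGE k V 2 := by
          rw [pathsIdealGE]
          exact TwoSidedIdeal.subset_span ⟨_, _, _, hu2, rfl⟩
        have hμa : μ • arrowEl k a ∈ pathsIdealGE k V 2 := by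
          have hrw : μ • arrowEl k a
              = pathEl k (Quiver.Path.cons (Quiver.Path.cons r s) b)
                - (pathEl k (Quiver.Path.cons (Quiver.Path.cons r s) b)
                  - μ • arrowEl k a) := by abel
          rw [hrw]
          exact TwoSidedIdeal.sub_mem _ hu_mem (hIle hz)
        have h2 := (TwoSidedIdeal.mem_ker _).mp (pathsIdealGE_two_le_ker k a hμa)
        rw [map_smul, Fmat_arrow] at h2
        have e := Matrix.ext_iff.mpr h2 1 0
        simp [FGen, Matrix.smul_apply] at e
        rw [mem_iff_mk'_eq_zero]
        rw [← hμ', e, zero_smul]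
  refine ⟨part1, ?_⟩
  intro φ x y a u τ hbyp hspec z
  obtain ⟨hver, harr, hα⟩ := hspec
  have hu : pathEl k u ∈ I := part1 x y a u hbyp
  have key : ∀ w : PathAlg k V, φ w - w ∈ I := by
    intro w
    obtain ⟨w, rfl⟩ := RingQuot.mkAlgHom_surjective k (PARel k V) w
    induction w using FreeAlgebra.induction with
    | grade0 r =>
        rw [AlgHom.commutes]
        show φ ((algebraMap k (PathAlg k V)) r) - (algebraMap k (PathAlg k V)) r ∈ I
        rw [AlgEquiv.commutes]
        simpa using I.zero_mem
    | grade1 g =>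
        match g with
        | Sum.inl v =>
            rw [show RingQuot.mkAlgHom k (PARel k V) (FreeAlgebra.ι k (Sum.inl v))
                  = vertexEl k v from rfl, hver v]
            simpa using I.zero_mem
        | Sum.inr ⟨s, t, b⟩ =>
            by_cases hb : (⟨s, t, b⟩ : Σ x y : V, x ⟶ y) = ⟨x, y, a⟩
            · obtain ⟨rfl, h2⟩ := Sigma.mk.inj_iff.mp hb
              obtain ⟨rfl, h3⟩ := Sigma.mk.inj_iff.mp (eq_of_heq h2)
              obtain rfl := eq_of_heq h3
              rw [show RingQuot.mkAlgHom k (PARel k V) (FreeAlgebra.ι k (Sum.inr ⟨s, t, b⟩))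
                    = arrowEl k b from rfl, hα, add_sub_cancel_left, Algebra.smul_def]
              exact I.mul_mem_left _ _ hu
            · rw [show RingQuot.mkAlgHom k (PARel k V) (FreeAlgebra.ι k (Sum.inr ⟨s, t, b⟩))
                    = arrowEl k b from rfl, harr b hb]
              simpa using I.zero_mem
    | mul p q hp hq =>
        erw [map_mul, map_mul]
        have gen : ∀ A B C D : PathAlg k V,
            (A - C) * B + C * (B - D) = A * B - C * D := by
          intro A B C D; noncomm_ring
        exact gen _ _ _ _ ▸ I.add_mem (I.mul_mem_right _ _ hp) (I.mul_mem_left _ _ hq)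
    | add p q hp hq =>
        erw [map_add, map_add]
        have gen : ∀ A B C D : PathAlg k V,
            (A - C) + (B - D) = (A + B) - (C + D) := by
          intro A B C D; abel
        exact gen _ _ _ _ ▸ I.add_mem hp hq
  constructor
  · intro hz
    have h2 := I.add_mem (key z) hz
    simpa using h2
  · intro hz
    have h2 := I.sub_mem hz (key z)
    simpa using h2
end
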